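/- arXiv:2402.17221 — 7 statements merged into one kernel-verified Lean document; each statement's English description precedes it below -/
import Mathlib

section
/- A point g in the open positive orthant (0,∞)^d is an interior generator (a minimum of the record-setting region S with respect to the coordinatewise order ≤, with all coordinates nonzero) if and only if (i) g ∈ S, and (ii) there exist d distinct indices i_1, …, i_d such that for every j ∈ [d], g_j = r^{(i_j)}_j = min{ r^{(i_ℓ)}_j : ℓ ∈ [d] }. -/
/-!
If `g` is minimal in `S` and `g j > 0`, lowering `g j` to any `t < g j` leaves `S`, so some
`r i` strictly dominates the lowered point. Taking `t` above every `r i j < g j` forces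
`r i j = g j`, while `r i` stays strictly above `g` in every other coordinate: `r i` pins `g` at
`j`. Points pinning different coordinates are distinct and realise the minimum in their
coordinate. Conversely, without ties, injectivity and the minimum condition make `r (σ j)` pin
`g` at `j`, and a pin at `j` keeps every point of `S` below `g` from being smaller at `j`.
-/

open Filter Topology

namespace RecordRegion

variable {ι κ : Type*} (r : ι → κ → ℝ)

def recordRegion : Set (κ → ℝ) :=
  {x | (∀ j, 0 ≤ x j) ∧ ∀ i, ¬ ∀ j, x j < r i j}

def Pins (g : κ → ℝ) (j : κ) (i : ι) : Prop :=
  g j = r i j ∧ ∀ j' ≠ j, g j' < r i j'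

variable {r} {g : κ → ℝ}

theorem mem_recordRegion {x : κ → ℝ} :
    x ∈ recordRegion r ↔ (∀ j, 0 ≤ x j) ∧ ∀ i, ∃ j, r i j ≤ x j := by
  simp only [recordRegion, Set.mem_ofPred_eq, not_forall, not_lt]

theorem exists_dominates_update_of_minimal (hmin : Minimal (· ∈ recordRegion r) g) {j : κ}
    {t : ℝ} (ht0 : 0 ≤ t) (htg : t < g j) : ∃ i, t < r i j ∧ ∀ j' ≠ j, g j' < r i j' := by
  classical
  set x := Function.update g j t
  have hx0 : ∀ j', 0 ≤ x j' := by
    intro j'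
    rcases eq_or_ne j' j with rfl | hj'
    · simpa [x] using ht0
    · simpa [x, hj'] using (mem_recordRegion.1 hmin.prop).1 j'
  have hxS : x ∉ recordRegion r := fun hx =>
    htg.ne (by simpa [x] using congrFun (hmin.eq_of_le hx (update_le_self_iff.2 htg.le)) j)
  obtain ⟨i, hi⟩ : ∃ i, ∀ j', x j' < r i j' := by
    simpa [mem_recordRegion, hx0, not_le] using hxS
  exact ⟨i, by simpa [x] using hi j, fun j' hj' => by simpa [x, hj'] using hi j'⟩

theorem exists_pins_of_minimal [Finite ι] (hmin : Minimal (· ∈ recordRegion r) g) {j : κ}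
    (hgj : 0 < g j) : ∃ i, Pins r g j i := by
  have hnear : ∀ᶠ t in 𝓝 (g j), 0 ≤ t ∧ ∀ i, r i j < g j → r i j < t := by
    refine (eventually_gt_nhds hgj).mono (fun _ => le_of_lt) |>.and ?_
    refine eventually_all.2 fun i => ?_
    by_cases hi : r i j < g j
    · exact (eventually_gt_nhds hi).mono fun _ ht _ => ht
    · exact .of_forall fun _ h => absurd h hi
  obtain ⟨t, ⟨ht0, hgap⟩, htg⟩ :=
    ((eventually_nhdsWithin_of_eventually_nhds hnear).and self_mem_nhdsWithin :
      ∀ᶠ t in 𝓝[<] (g j), _).exists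
  obtain ⟨i, hti, hoff⟩ := exists_dominates_update_of_minimal hmin ht0 htg
  refine ⟨i, le_antisymm (not_lt.1 fun hlt => (hgap i hlt).not_gt hti) ?_, hoff⟩
  obtain ⟨j', hj'⟩ := (mem_recordRegion.1 hmin.prop).2 i
  rcases eq_or_ne j' j with rfl | hne
  · exact hj'
  · exact absurd hj' (hoff j' hne).not_ge

theorem minimal_of_forall_exists_pins (hg : g ∈ recordRegion r)
    (hpins : ∀ j, ∃ i, Pins r g j i) : Minimal (· ∈ recordRegion r) g := by
  refine ⟨hg, fun x hx hxg j => not_lt.1 fun hlt => ?_⟩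
  obtain ⟨i, hij, hoff⟩ := hpins j
  obtain ⟨j', hj'⟩ := (mem_recordRegion.1 hx).2 i
  rcases eq_or_ne j' j with rfl | hne
  · exact hj'.not_gt (hij ▸ hlt)
  · exact hj'.not_gt ((hxg j').trans_lt (hoff j' hne))

variable {σ : κ → ι}

theorem injective_and_le_of_pins (hσ : ∀ j, Pins r g j (σ j)) :
    Function.Injective σ ∧ ∀ j, g j = r (σ j) j ∧ ∀ ℓ, r (σ j) j ≤ r (σ ℓ) j := by
  refine ⟨fun j ℓ hjℓ => by_contra fun hne => ?_, fun j => ⟨(hσ j).1, fun ℓ => ?_⟩⟩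
  · have := (hσ ℓ).2 j hne
    rw [← hjℓ, ← (hσ j).1] at this
    exact lt_irrefl _ this
  · rcases eq_or_ne j ℓ with rfl | hne
    · exact le_rfl
    · exact (hσ j).1 ▸ ((hσ ℓ).2 j hne).le

theorem pins_of_injective_of_le (hties : ∀ j, Function.Injective fun i => r i j)
    (hσ : Function.Injective σ) (hle : ∀ j, g j = r (σ j) j ∧ ∀ ℓ, r (σ j) j ≤ r (σ ℓ) j)
    (j : κ) : Pins r g j (σ j) :=
  ⟨(hle j).1, fun j' hne => (hle j').1 ▸ ((hle j').2 j).lt_of_ne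
    fun h => hne (hσ (hties j' h))⟩

end RecordRegion

open RecordRegion in
theorem stmt4_general (d ρ : ℕ) (r : Fin ρ → Fin d → ℝ)
    (hties : ∀ j, Function.Injective fun i => r i j)
    (S : Set (Fin d → ℝ))
    (hS : S = {x | (∀ j, 0 ≤ x j) ∧ ∀ i, ¬ ∀ j, x j < r i j})
    (g : Fin d → ℝ) (hg : ∀ j, 0 < g j) :
    (g ∈ S ∧ ∀ x ∈ S, (∀ j, x j ≤ g j) → x = g) ↔
      (g ∈ S ∧ ∃ ι : Fin d → Fin ρ, Function.Injective ι ∧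
        ∀ j, g j = r (ι j) j ∧ ∀ ℓ, r (ι j) j ≤ r (ι ℓ) j) := by
  replace hS : S = recordRegion r := hS
  subst hS
  have hminimal : (g ∈ recordRegion r ∧ ∀ x ∈ recordRegion r, (∀ j, x j ≤ g j) → x = g) ↔
      Minimal (· ∈ recordRegion r) g := by
    rw [minimal_iff]
    exact and_congr_right fun _ => forall₂_congr fun _ _ => imp_congr_right fun _ => eq_comm
  rw [hminimal]
  constructor
  · intro hmin
    choose σ hσ using fun j => exists_pins_of_minimal hmin (hg j)
    exact ⟨hmin.prop, σ, injective_and_le_of_pins hσ⟩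
  · rintro ⟨hgS, σ, hσ, hle⟩
    exact minimal_of_forall_exists_pins hgS fun j => ⟨σ j, pins_of_injective_of_le hties hσ hle j⟩

theorem stmt4 (d ρ : ℕ) (hd : 1 ≤ d) (r : Fin ρ → Fin d → ℝ)
    (hpos : ∀ i j, 0 < r i j)
    (hinc : ∀ i k, i ≠ k → ¬ ∀ j, r i j < r k j)
    (hties : ∀ j, Function.Injective fun i => r i j)
    (S : Set (Fin d → ℝ))
    (hS : S = {x | (∀ j, 0 ≤ x j) ∧ ∀ i, ¬ ∀ j, x j < r i j})
    (g : Fin d → ℝ) (hg : ∀ j, 0 < g j) :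
    (g ∈ S ∧ ∀ x ∈ S, (∀ j, x j ≤ g j) → x = g) ↔
      (g ∈ S ∧ ∃ ι : Fin d → Fin ρ, Function.Injective ι ∧
        ∀ j, g j = r (ι j) j ∧ ∀ ℓ, r (ι j) j ≤ r (ι ℓ) j) :=
  stmt4_general d ρ r hties S hS g hg
end

section
/- For every subset T ⊆ [d], the set of generators whose set of nonzero coordinates is exactly T equals the injection (via ι_T, filling other coordinates with 0) of the set of interior generators of the projected point set π_T(R) ⊂ ℝ^{|T|}. -/
/-- The record-setting region determined by points `r i : κ → ℝ` (with coordinate set `κ`). -/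
def RSreg {κ : Type*} {ρ : ℕ} (r : Fin ρ → κ → ℝ) : Set (κ → ℝ) :=
  {x | (∀ j, 0 ≤ x j) ∧ ∀ i, ¬ ∀ j, x j < r i j}

/-- `g` is a generator: a minimal element of the record-setting region under the
coordinatewise partial order. -/
def IsGen {κ : Type*} {ρ : ℕ} (r : Fin ρ → κ → ℝ) (g : κ → ℝ) : Prop :=
  g ∈ RSreg r ∧ ∀ x ∈ RSreg r, (∀ j, x j ≤ g j) → x = g

/-!
A point supported on `T` lies below a fixed point `r⁽ⁱ⁾` in every coordinate outside `T`,
because `r⁽ⁱ⁾` is positive there; so it is dominated by `r⁽ⁱ⁾` iff its projection is dominated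
by `π_T r⁽ⁱ⁾`. Hence `ι_T` identifies the part of the record-setting region supported on `T`
with the projected region, order-preservingly. A generator `g` is supported on `ν(g)`, and
anything below it in the region is supported there too, so minimality transfers both ways.
-/

section ExtendByZero

variable {κ : Type*} [DecidableEq κ] {T : Finset κ}

/-- The injection `ι_T`. -/
def extendByZero (T : Finset κ) (y : T → ℝ) : κ → ℝ :=
  fun j => if h : j ∈ T then y ⟨j, h⟩ else 0

@[simp]
lemma extendByZero_apply_coe (y : T → ℝ) (j : T) : extendByZero T y j = y j := by
  simp [extendByZero]

lemma extendByZero_of_mem (y : T → ℝ) {j : κ} (hj : j ∈ T) : extendByZero T y j = y ⟨j, hj⟩ := by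
  simp [extendByZero, hj]

lemma extendByZero_of_notMem (y : T → ℝ) {j : κ} (hj : j ∉ T) : extendByZero T y j = 0 := by
  simp [extendByZero, hj]

lemma extendByZero_restrict {x : κ → ℝ} (hx : ∀ j ∉ T, x j = 0) :
    extendByZero T (fun j : T => x j) = x := by
  funext j
  by_cases hj : j ∈ T
  · simp [extendByZero, hj]
  · simp [extendByZero, hj, hx j hj]

lemma extendByZero_injective : Function.Injective (extendByZero (κ := κ) T) := by
  intro y z h
  funext j
  simpa using congrFun h j

lemma setOf_extendByZero_ne_zero_eq_iff (y : T → ℝ) :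
    {j | extendByZero T y j ≠ 0} = ↑T ↔ ∀ j, y j ≠ 0 := by
  constructor
  · intro h j
    have hj : (j : κ) ∈ {j | extendByZero T y j ≠ 0} := by rw [h]; exact j.2
    simpa using hj
  · intro h
    ext j
    by_cases hj : j ∈ T
    · simpa [extendByZero_of_mem y hj, hj] using h ⟨j, hj⟩
    · simp [extendByZero_of_notMem y hj, hj]

lemma forall_extendByZero_iff {P : κ → ℝ → Prop} (hP : ∀ j ∉ T, P j 0) (y : T → ℝ) :
    (∀ j, P j (extendByZero T y j)) ↔ ∀ j : T, P j (y j) := by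
  refine ⟨fun h j => by simpa using h j, fun h j => ?_⟩
  by_cases hj : j ∈ T
  · simpa [extendByZero_of_mem y hj] using h ⟨j, hj⟩
  · simpa [extendByZero_of_notMem y hj] using hP j hj

variable {ρ : ℕ} {r : Fin ρ → κ → ℝ}

lemma extendByZero_mem_RSreg_iff (hpos : ∀ i j, 0 < r i j) (y : T → ℝ) :
    extendByZero T y ∈ RSreg r ↔ y ∈ RSreg (fun i (j : T) => r i j) := by
  have hdom (i : Fin ρ) := forall_extendByZero_iff (P := fun j a => a < r i j)
    (fun j _ => hpos i j) y
  simp only [RSreg, Set.mem_ofPred_eq, forall_extendByZero_iff (fun _ _ => le_refl (0 : ℝ)), hdom]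

lemma isGen_extendByZero_iff (hpos : ∀ i j, 0 < r i j) (y : T → ℝ) :
    IsGen r (extendByZero T y) ↔ IsGen (fun i (j : T) => r i j) y := by
  constructor
  · rintro ⟨hmem, hmin⟩
    refine ⟨(extendByZero_mem_RSreg_iff hpos y).1 hmem, fun z hz hzy => ?_⟩
    have hle : ∀ j, extendByZero T z j ≤ extendByZero T y j :=
      (forall_extendByZero_iff (P := fun j a => a ≤ extendByZero T y j) (fun j hj => (extendByZero_of_notMem y hj).ge) z).2 fun j => by
        simpa using hzy j
    exact extendByZero_injective (hmin _ ((extendByZero_mem_RSreg_iff hpos z).2 hz) hle)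
  · rintro ⟨hmem, hmin⟩
    refine ⟨(extendByZero_mem_RSreg_iff hpos y).2 hmem, fun x hx hxy => ?_⟩
    have hsupp : ∀ j ∉ T, x j = 0 := fun j hj =>
      le_antisymm (extendByZero_of_notMem y hj ▸ hxy j) (hx.1 j)
    rw [← extendByZero_restrict hsupp] at hx ⊢
    rw [hmin _ ((extendByZero_mem_RSreg_iff hpos _).1 hx) fun j => by simpa using hxy j]

end ExtendByZero

theorem stmt5_general (d ρ : ℕ) (r : Fin ρ → Fin d → ℝ)
    (hpos : ∀ i j, 0 < r i j)
    (T : Finset (Fin d)) :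
    {g : Fin d → ℝ | IsGen r g ∧ {j | g j ≠ 0} = ↑T} =
      (fun y : (T → ℝ) => fun j : Fin d => if h : j ∈ T then y ⟨j, h⟩ else 0) ''
        {y : (T → ℝ) | IsGen (fun i (j : T) => r i j.1) y ∧ ∀ j, y j ≠ 0} := by
  ext g
  change _ ↔ g ∈ extendByZero T '' _
  constructor
  · rintro ⟨hgen, hsupp⟩
    have hzero : ∀ j ∉ T, g j = 0 := fun j hj => by
      by_contra hne
      exact hj (Finset.mem_coe.1 (hsupp ▸ hne))
    rw [← extendByZero_restrict hzero] at hgen hsupp ⊢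
    exact ⟨_, ⟨(isGen_extendByZero_iff hpos _).1 hgen,
      (setOf_extendByZero_ne_zero_eq_iff _).1 hsupp⟩, rfl⟩
  · rintro ⟨y, ⟨hgen, hne⟩, rfl⟩
    exact ⟨(isGen_extendByZero_iff hpos y).2 hgen, (setOf_extendByZero_ne_zero_eq_iff y).2 hne⟩

theorem stmt5 (d ρ : ℕ) (r : Fin ρ → Fin d → ℝ)
    (hpos : ∀ i j, 0 < r i j)
    (hinc : ∀ i k, i ≠ k → ¬ ∀ j, r i j < r k j)
    (hties : ∀ j, Function.Injective fun i => r i j)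
    (T : Finset (Fin d)) :
    {g : Fin d → ℝ | IsGen r g ∧ {j | g j ≠ 0} = ↑T} =
      (fun y : (T → ℝ) => fun j : Fin d => if h : j ∈ T then y ⟨j, h⟩ else 0) ''
        {y : (T → ℝ) | IsGen (fun i (j : T) => r i j.1) y ∧ ∀ j, y j ≠ 0} :=
  stmt5_general d ρ r hpos T
end

section
/- The record-setting region S determined by incomparable points r^{(1)}, …, r^{(ρ)} ∈ (0,∞)^d equals the union over all ordered partitions Π = (Π_1, …, Π_d) of [ρ] into d (possibly empty) cells of the closed upper orthants O^+(R_1^{(Π_1)}, …, R_d^{(Π_d)}), where R_j^{(P)} := max_{i ∈ P} r^{(i)}_j (with max over ∅ defined as 0). -/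
/-! Record-setting fails for `x` exactly when `x` is strictly dominated by some `r i`, so `x ∈ S`
means that every `r i` is weakly beaten by `x` in some coordinate `k i`. Choosing such a coordinate
for each `i` is the partition `k`, and "beaten in coordinate `j` by every `i` of the cell `k⁻¹ j`" is
the inequality `R_j ≤ x j`; an empty cell gives `R_j = 0`, harmless since `x ≥ 0`. -/

theorem iSup_fiber_le_iff {ι κ : Type*} [Finite ι] (r : ι → κ → ℝ) (k : ι → κ) {x : κ → ℝ}
    (hx : ∀ j, 0 ≤ x j) :
    (∀ j, (⨆ i : {i // k i = j}, r i.1 j) ≤ x j) ↔ ∀ i, r i (k i) ≤ x (k i) := by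
  constructor
  · intro h i
    exact (le_ciSup (f := fun m : {m // k m = k i} => r m.1 (k i))
      (Finite.bddAbove_range _) ⟨i, rfl⟩).trans (h (k i))
  · rintro h j
    exact Real.iSup_le (fun ⟨i, hi⟩ => hi ▸ h i) (hx j)

theorem stmt6_general (d ρ : ℕ) (r : Fin ρ → Fin d → ℝ) :
    {x : Fin d → ℝ | (∀ j, 0 ≤ x j) ∧ ∀ i, ¬ ∀ j, x j < r i j} =
      ⋃ k : Fin ρ → Fin d,
        {y : Fin d → ℝ | ∀ j, 0 ≤ y j ∧ (⨆ i : {i // k i = j}, r i.1 j) ≤ y j} := by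
  ext x
  simp only [Set.mem_ofPred_eq, Set.mem_iUnion, forall_and, exists_and_left]
  refine and_congr_right fun hx => ?_
  push Not
  rw [Classical.skolem]
  exact exists_congr fun k => (iSup_fiber_le_iff r k hx).symm

theorem stmt6 (d ρ : ℕ) (r : Fin ρ → Fin d → ℝ)
    (hpos : ∀ i j, 0 < r i j)
    (hinc : ∀ i k, i ≠ k → ¬ ∀ j, r i j < r k j) :
    {x : Fin d → ℝ | (∀ j, 0 ≤ x j) ∧ ∀ i, ¬ ∀ j, x j < r i j} =
      ⋃ k : Fin ρ → Fin d,
        {y : Fin d → ℝ | ∀ j, 0 ≤ y j ∧ (⨆ i : {i // k i = j}, r i.1 j) ≤ y j} :=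
  stmt6_general d ρ r
end

section
/- For n ≥ d ≥ 1, E ι_{d,n} = n^{\underline d} Σ_{j=0}^{d-1} (-1)^j C(d-1,j)/(n-d+j+1) · E ρ_{d, n-d+j+1}, relating the expected number of interior generators to expected numbers of remaining records, where n^{\underline d} = n(n-1)⋯(n-d+1). -/
open MeasureTheory Set

/-! Expanding `x_× ^ (d - 1) = (1 - (1 - x_×)) ^ (d - 1)` by the binomial theorem writes the integrand
of `E ι_{d,n}` as a signed combination of the powers `(1 - x_×) ^ (n - d + j)`, whose integrals are
`E ρ_{d, n-d+j+1} / (n - d + j + 1)`. -/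

theorem pow_mul_one_sub_pow_eq_sum {R : Type*} [CommRing R] (t : R) (k m : ℕ) :
    t ^ k * (1 - t) ^ m =
      ∑ j ∈ Finset.range (k + 1), (-1) ^ j * (k.choose j : R) * (1 - t) ^ (m + j) := by
  nth_rewrite 1 [show t = -(1 - t) + 1 by ring]
  rw [add_pow, Finset.sum_mul]
  refine Finset.sum_congr rfl fun j _ => ?_
  rw [neg_pow, one_pow, pow_add]
  ring

theorem Continuous.integrableOn_univ_pi_Ioc {ι : Type*} [Fintype ι] {f : (ι → ℝ) → ℝ}
    {μ : Measure (ι → ℝ)} [IsLocallyFiniteMeasure μ] (hf : Continuous f) (a b : ι → ℝ) :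
    IntegrableOn f (univ.pi fun i => Ioc (a i) (b i)) μ := by
  refine (hf.integrableOn_Icc (a := a) (b := b)).mono_set ?_
  rw [← pi_univ_Icc]
  exact pi_mono fun _ _ => Ioc_subset_Icc_self

theorem stmt9 (d n : ℕ) (hd : 1 ≤ d) (hn : d ≤ n) :
    (n.descFactorial d : ℝ) *
        ∫ x in Set.univ.pi fun _ : Fin d => Set.Ioc (0 : ℝ) 1,
          (∏ j, x j) ^ (d - 1) * (1 - ∏ j, x j) ^ (n - d) =
      (n.descFactorial d : ℝ) *
        ∑ j ∈ Finset.range d,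
          (-1 : ℝ) ^ j * ((d - 1).choose j : ℝ) / ((n : ℝ) - d + j + 1) *
            (((n : ℝ) - d + j + 1) *
              ∫ x in Set.univ.pi fun _ : Fin d => Set.Ioc (0 : ℝ) 1,
                (1 - ∏ i, x i) ^ (n - d + j)) := by
  obtain ⟨k, rfl⟩ : ∃ k, d = k + 1 := ⟨d - 1, by omega⟩
  congr 1
  simp_rw [Nat.add_sub_cancel, pow_mul_one_sub_pow_eq_sum]
  rw [integral_finsetSum _ fun j _ =>
    ((by fun_prop : Continuous fun x : Fin (k + 1) → ℝ => (1 - ∏ i, x i) ^ (n - (k + 1) + j))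
      |>.integrableOn_univ_pi_Ioc _ _).const_mul _]
  refine Finset.sum_congr rfl fun j _ => ?_
  have hN : (n : ℝ) - (k + 1 : ℕ) + j + 1 ≠ 0 := by
    have : ((k + 1 : ℕ) : ℝ) ≤ n := by exact_mod_cast hn
    positivity
  rw [integral_const_mul]
  field_simp
end

section
/- For d ≥ 1 and n ≥ 1, the expected number of remaining records E ρ_{d,n} = n ∫_{(0,1]^d} (1 - x_1⋯x_d)^{n-1} dx equals the Roman harmonic number Σ_{j=1}^n (-1)^{j-1} C(n,j) j^{-(d-1)}. -/
open MeasureTheory Set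

/-!
Expand `(1 - x_×)^(n-1)` binomially. By Fubini the monomial `x_×^k` integrates to `(k+1)^(-d)`
over the unit cube, and `n * C(n-1, k) = (k+1) * C(n, k+1)` turns the resulting alternating sum
into the Roman harmonic number.
-/

lemma one_sub_pow_eq_sum {R : Type*} [CommRing R] (x : R) (m : ℕ) :
    (1 - x) ^ m = ∑ k ∈ Finset.range (m + 1), (-1) ^ k * (m.choose k : R) * x ^ k := by
  rw [sub_eq_neg_add, add_pow]
  refine Finset.sum_congr rfl fun k _ => ?_
  rw [one_pow, mul_one, neg_pow]
  ring

lemma volume_restrict_cube (ι : Type*) [Fintype ι] :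
    volume.restrict (univ.pi fun _ : ι => Ioc (0 : ℝ) 1)
      = Measure.pi fun _ => volume.restrict (Ioc (0 : ℝ) 1) := by
  rw [volume_pi, Measure.restrict_pi_pi]

lemma integral_Ioc_zero_one_pow (k : ℕ) :
    ∫ t in Ioc (0 : ℝ) 1, t ^ k = ((k : ℝ) + 1)⁻¹ := by
  rw [← intervalIntegral.integral_of_le zero_le_one, integral_pow]
  simp

lemma integrable_cube_prod_pow {ι : Type*} [Fintype ι] (k : ℕ) :
    IntegrableOn (fun x : ι → ℝ => (∏ j, x j) ^ k) (univ.pi fun _ => Ioc (0 : ℝ) 1) := by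
  simp_rw [IntegrableOn, volume_restrict_cube, ← Finset.prod_pow]
  exact Integrable.fintype_prod fun _ =>
    (intervalIntegrable_iff_integrableOn_Ioc_of_le zero_le_one).1
      (intervalIntegral.intervalIntegrable_pow k)

lemma integral_cube_prod_pow (ι : Type*) [Fintype ι] (k : ℕ) :
    ∫ x in univ.pi fun _ : ι => Ioc (0 : ℝ) 1, (∏ j, x j) ^ k
      = ((k + 1 : ℝ) ^ Fintype.card ι)⁻¹ := by
  simp_rw [volume_restrict_cube, ← Finset.prod_pow]
  rw [integral_fintype_prod_eq_pow (fun t : ℝ => t ^ k), integral_Ioc_zero_one_pow,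
    inv_pow]

lemma integral_cube_one_sub_prod_pow (ι : Type*) [Fintype ι] (m : ℕ) :
    ∫ x in univ.pi fun _ : ι => Ioc (0 : ℝ) 1, (1 - ∏ j, x j) ^ m
      = ∑ k ∈ Finset.range (m + 1),
          (-1) ^ k * (m.choose k : ℝ) / (k + 1 : ℝ) ^ Fintype.card ι := by
  simp_rw [one_sub_pow_eq_sum]
  rw [integral_finsetSum _ fun k _ => (integrable_cube_prod_pow k).const_mul _]
  simp_rw [integral_const_mul, integral_cube_prod_pow, div_eq_mul_inv]

lemma succ_mul_sum_choose_div_pow_eq (e m : ℕ) :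
    (m + 1 : ℝ) * ∑ k ∈ Finset.range (m + 1),
        (-1) ^ k * (m.choose k : ℝ) / (k + 1 : ℝ) ^ (e + 1)
      = ∑ j ∈ Finset.Icc 1 (m + 1),
          (-1 : ℝ) ^ (j - 1) * ((m + 1).choose j : ℝ) / (j : ℝ) ^ e := by
  rw [Finset.mul_sum, ← Finset.Ico_add_one_right_eq_Icc, Finset.sum_Ico_eq_sum_range,
    Nat.add_sub_cancel]
  refine Finset.sum_congr rfl fun k _ => ?_
  have hchoose : (m + 1 : ℝ) * m.choose k = (m + 1).choose (k + 1) * (k + 1) := by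
    exact_mod_cast Nat.add_one_mul_choose_eq m k
  rw [add_comm 1 k, Nat.add_sub_cancel, Nat.cast_add_one, pow_succ]
  field_simp
  linear_combination hchoose

theorem stmt10_general (d n : ℕ) (hd : 1 ≤ d) :
    (n : ℝ) *
        ∫ x in Set.univ.pi fun _ : Fin d => Set.Ioc (0 : ℝ) 1,
          (1 - ∏ j, x j) ^ (n - 1) =
      ∑ j ∈ Finset.Icc 1 n, (-1 : ℝ) ^ (j - 1) * (n.choose j : ℝ) / (j : ℝ) ^ (d - 1) := by
  obtain ⟨e, rfl⟩ := Nat.exists_eq_add_of_le' hd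
  rcases n with _ | m
  · simp
  · rw [Nat.add_sub_cancel, Nat.add_sub_cancel, integral_cube_one_sub_prod_pow,
      Fintype.card_fin, Nat.cast_succ]
    exact succ_mul_sum_choose_div_pow_eq e m

theorem stmt10 (d n : ℕ) (hd : 1 ≤ d) (hn : 1 ≤ n) :
    (n : ℝ) *
        ∫ x in Set.univ.pi fun _ : Fin d => Set.Ioc (0 : ℝ) 1,
          (1 - ∏ j, x j) ^ (n - 1) =
      ∑ j ∈ Finset.Icc 1 n, (-1 : ℝ) ^ (j - 1) * (n.choose j : ℝ) / (j : ℝ) ^ (d - 1) :=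
  stmt10_general d n hd
end

section
/- For any d ≥ 1 and n ≥ 1, with ι̂_{d,n} := n^d ∫_{[0,1)^d} x_×^{d-1} e^{-n x_×} dx and ι̃_{d,n} := n^d ∫_{[0,1)^d} x_×^{d-1} (1 - x_×)^n dx, one has 0 ≤ ι̂_{d,n} - ι̃_{d,n} ≤ n^{d+1} ∫_{[0,1)^d} x_×^{d+1} e^{-n x_×} dx, and for fixed d this difference is O(n^{-1}(ln n)^{d-1}) as n → ∞. -/
/-!
Write `t = x_×`. On `[0, 1]` we have `e^{-nt} (1 - n t²) ≤ (1 - t)^n ≤ e^{-nt}`, and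
`t^{d-1} t² ≤ t^{d+1}`; integrating gives the two inequalities.

For the rate put `E_d(m) = ∫_{[0,1)^d} e^{-m x_×} dx`. With `s = n x_×`, the bound
`s^{d+1} e^{-s} ≤ (d+1)! 2^{d+1} e^{-s/2}` shows that the upper bound is at most a constant times
`E_d(n/2)`. Integrating out the first coordinate and substituting `u = m t` gives
`E_{d+1}(m) = m⁻¹ ∫_0^m E_d(u) du`. Since `E_d ≤ 1` on `[0, 1]`, and
`∫_1^m u⁻¹ (1 + log u)^d du = ((1 + log m)^{d+1} - 1)/(d+1)`, induction on `d` yields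
`E_{d+1}(m) ≤ m⁻¹ (1 + log m)^d` for `m ≥ 1`.
-/

open MeasureTheory Filter Asymptotics Set

/-- `ι̂_{d,n} = n^d ∫_{[0,1)^d} x_×^{d-1} e^{-n x_×} dx`. -/
noncomputable def iotaHat (d n : ℕ) : ℝ :=
  (n : ℝ) ^ d *
    ∫ x in Set.univ.pi fun _ : Fin d => Set.Ico (0 : ℝ) 1,
      (∏ j, x j) ^ (d - 1) * Real.exp (-(n : ℝ) * ∏ j, x j)

/-- `ι̃_{d,n} = n^d ∫_{[0,1)^d} x_×^{d-1} (1 - x_×)^n dx`. -/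
noncomputable def iotaTilde (d n : ℕ) : ℝ :=
  (n : ℝ) ^ d *
    ∫ x in Set.univ.pi fun _ : Fin d => Set.Ico (0 : ℝ) 1,
      (∏ j, x j) ^ (d - 1) * (1 - ∏ j, x j) ^ n

lemma one_sub_pow_le_exp_neg_mul {t : ℝ} (ht : t ≤ 1) (n : ℕ) :
    (1 - t) ^ n ≤ Real.exp (-n * t) :=
  calc (1 - t) ^ n ≤ Real.exp (-t) ^ n :=
        pow_le_pow_left₀ (sub_nonneg.2 ht) (Real.one_sub_le_exp_neg t) n
    _ = Real.exp (-n * t) := by rw [← Real.exp_nat_mul]; ring_nf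

lemma exp_neg_mul_mul_le_one_sub_pow {t : ℝ} (ht₀ : -1 ≤ t) (ht₁ : t ≤ 1) (n : ℕ) :
    Real.exp (-n * t) * (1 - n * t ^ 2) ≤ (1 - t) ^ n := by
  have hsq : 0 ≤ 1 - t ^ 2 := by nlinarith
  -- `1 - t² = (1 + t) (1 - t)` and `e^{-t} (1 + t) ≤ 1`
  have hstep : Real.exp (-t) * (1 - t ^ 2) ≤ 1 - t := by
    have h := mul_le_mul_of_nonneg_left (Real.add_one_le_exp t) (Real.exp_pos (-t)).le
    rw [← Real.exp_add, neg_add_cancel, Real.exp_zero] at h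
    nlinarith
  calc Real.exp (-n * t) * (1 - n * t ^ 2)
      ≤ Real.exp (-n * t) * (1 - t ^ 2) ^ n := by
        gcongr
        simpa [sub_eq_add_neg] using one_add_mul_le_pow (a := -t ^ 2) (by nlinarith) n
    _ = (Real.exp (-t) * (1 - t ^ 2)) ^ n := by
        rw [mul_pow, ← Real.exp_nat_mul]; ring_nf
    _ ≤ (1 - t) ^ n := pow_le_pow_left₀ (mul_nonneg (Real.exp_pos _).le hsq) hstep n

lemma pow_mul_exp_neg_le {s : ℝ} (hs : 0 ≤ s) (k : ℕ) :
    s ^ k * Real.exp (-s) ≤ k.factorial * 2 ^ k * Real.exp (-(s / 2)) := by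
  have h := Real.pow_div_factorial_le_exp (s / 2) (div_nonneg hs zero_le_two) k
  rw [div_le_iff₀ (by positivity), div_pow, div_le_iff₀ (by positivity)] at h
  calc s ^ k * Real.exp (-s) ≤ Real.exp (s / 2) * k.factorial * 2 ^ k * Real.exp (-s) := by
        gcongr
    _ = k.factorial * 2 ^ k * Real.exp (-(s / 2)) := by
        rw [mul_comm _ (Real.exp (-s)), ← mul_assoc, ← mul_assoc, ← Real.exp_add]
        ring_nf

def unitCube (d : ℕ) : Set (Fin d → ℝ) := univ.pi fun _ => Ico (0 : ℝ) 1

lemma measurableSet_unitCube (d : ℕ) : MeasurableSet (unitCube d) :=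
  MeasurableSet.univ_pi fun _ => measurableSet_Ico

lemma prod_mem_Icc_of_mem_unitCube {d : ℕ} {x : Fin d → ℝ} (hx : x ∈ unitCube d) :
    ∏ j, x j ∈ Icc (0 : ℝ) 1 :=
  ⟨Finset.prod_nonneg fun j _ => (hx j (mem_univ j)).1,
    Finset.prod_le_one (fun j _ => (hx j (mem_univ j)).1) fun j _ => (hx j (mem_univ j)).2.le⟩

lemma Continuous.integrableOn_unitCube {d : ℕ} {f : (Fin d → ℝ) → ℝ} (hf : Continuous f) :
    IntegrableOn f (unitCube d) :=
  (hf.continuousOn.integrableOn_compact (isCompact_univ_pi fun _ => isCompact_Icc)).mono_set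
    (pi_mono fun _ _ => Ico_subset_Icc_self)

lemma setIntegral_unitCube_succ {d : ℕ} {f : (Fin (d + 1) → ℝ) → ℝ}
    (hf : IntegrableOn f (unitCube (d + 1))) :
    ∫ x in unitCube (d + 1), f x = ∫ t in Ico 0 1, ∫ y in unitCube d, f (Fin.cons t y) := by
  have e := (measurePreserving_piFinSuccAbove
    (fun _ : Fin (d + 1) => volume.restrict (Ico (0 : ℝ) 1)) 0).symm
  rw [IntegrableOn] at hf
  simp only [unitCube, volume_pi, Measure.restrict_pi_pi] at hf ⊢
  rw [← e.integral_comp', integral_prod]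
  · simp [MeasurableEquiv.piFinSuccAbove_symm_apply, Fin.consEquiv]
  · exact e.integrable_comp_of_integrable hf

lemma volume_unitCube (d : ℕ) : volume (unitCube d) = 1 := by
  simp [unitCube, volume_pi_pi]

noncomputable def cubeExpIntegral (d : ℕ) (m : ℝ) : ℝ :=
  ∫ x in unitCube d, Real.exp (-m * ∏ j, x j)

lemma cubeExpIntegral_zero (m : ℝ) : cubeExpIntegral 0 m = Real.exp (-m) := by
  simp [cubeExpIntegral, measureReal_def, volume_unitCube]

lemma cubeExpIntegral_zero_right (d : ℕ) : cubeExpIntegral d 0 = 1 := by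
  simp [cubeExpIntegral, measureReal_def, volume_unitCube]

lemma cubeExpIntegral_nonneg (d : ℕ) (m : ℝ) : 0 ≤ cubeExpIntegral d m :=
  setIntegral_nonneg (measurableSet_unitCube d) fun _ _ => (Real.exp_pos _).le

lemma antitone_cubeExpIntegral (d : ℕ) : Antitone (cubeExpIntegral d) := by
  intro a b hab
  refine setIntegral_mono_on (Continuous.integrableOn_unitCube (by fun_prop))
    (Continuous.integrableOn_unitCube (by fun_prop)) (measurableSet_unitCube d) fun x hx => ?_
  have := (prod_mem_Icc_of_mem_unitCube hx).1
  gcongr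

lemma cubeExpIntegral_le_one (d : ℕ) {m : ℝ} (hm : 0 ≤ m) : cubeExpIntegral d m ≤ 1 :=
  cubeExpIntegral_zero_right d ▸ antitone_cubeExpIntegral d hm

lemma cubeExpIntegral_succ (d : ℕ) (m : ℝ) :
    cubeExpIntegral (d + 1) m = ∫ t in Ico 0 1, cubeExpIntegral d (m * t) := by
  rw [cubeExpIntegral, setIntegral_unitCube_succ (Continuous.integrableOn_unitCube (by fun_prop))]
  simp only [Fin.prod_cons, cubeExpIntegral, neg_mul, mul_assoc]

lemma cubeExpIntegral_succ_eq_inv_mul (d : ℕ) {m : ℝ} (hm : 0 < m) :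
    cubeExpIntegral (d + 1) m = m⁻¹ * ∫ u in 0..m, cubeExpIntegral d u := by
  rw [cubeExpIntegral_succ, setIntegral_congr_set Ico_ae_eq_Ioc,
    ← intervalIntegral.integral_of_le zero_le_one,
    intervalIntegral.integral_comp_mul_left _ hm.ne', mul_zero, mul_one, smul_eq_mul]

lemma intervalIntegrable_inv_mul_one_add_log_pow {m : ℝ} (hm : 0 < m) (k : ℕ) :
    IntervalIntegrable (fun u => u⁻¹ * (1 + Real.log u) ^ k) volume 1 m := by
  refine ContinuousOn.intervalIntegrable fun u hu => ContinuousAt.continuousWithinAt ?_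
  have hu0 : u ≠ 0 := (lt_of_lt_of_le (lt_min one_pos hm) hu.1).ne'
  fun_prop (disch := exact hu0)

lemma integral_inv_mul_one_add_log_pow {m : ℝ} (hm : 0 < m) (k : ℕ) :
    ∫ u in 1..m, u⁻¹ * (1 + Real.log u) ^ k = ((1 + Real.log m) ^ (k + 1) - 1) / (k + 1) := by
  have hderiv : ∀ u ∈ uIcc 1 m, HasDerivAt (fun u => (1 + Real.log u) ^ (k + 1) / (k + 1))
      (u⁻¹ * (1 + Real.log u) ^ k) u := by
    intro u hu
    have hu0 : u ≠ 0 := (lt_of_lt_of_le (lt_min one_pos hm) hu.1).ne'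
    refine ((((Real.hasDerivAt_log hu0).const_add 1).fun_pow (k + 1)).div_const
      ((k : ℝ) + 1)).congr_deriv ?_
    field_simp
    simp
  rw [intervalIntegral.integral_eq_sub_of_hasDerivAt hderiv
    (intervalIntegrable_inv_mul_one_add_log_pow hm k)]
  simp [sub_div]

lemma cubeExpIntegral_succ_le (d : ℕ) {m : ℝ} (hm : 1 ≤ m) :
    cubeExpIntegral (d + 1) m ≤ m⁻¹ * (1 + Real.log m) ^ d := by
  have hm0 : 0 < m := one_pos.trans_le hm
  rw [cubeExpIntegral_succ_eq_inv_mul d hm0]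
  refine mul_le_mul_of_nonneg_left ?_ (inv_nonneg.2 hm0.le)
  induction d generalizing m with
  | zero =>
    simpa [cubeExpIntegral_zero, intervalIntegral.integral_comp_neg] using (Real.exp_pos (-m)).le
  | succ k ih =>
    have hint (a b : ℝ) : IntervalIntegrable (cubeExpIntegral (k + 1)) volume a b :=
      (antitone_cubeExpIntegral (k + 1)).intervalIntegrable
    have hL : 1 ≤ (1 + Real.log m) ^ (k + 1) :=
      one_le_pow₀ (le_add_of_nonneg_right (Real.log_nonneg hm))
    calc ∫ u in 0..m, cubeExpIntegral (k + 1) u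
        = (∫ u in 0..1, cubeExpIntegral (k + 1) u) + ∫ u in 1..m, cubeExpIntegral (k + 1) u :=
          (intervalIntegral.integral_add_adjacent_intervals (hint 0 1) (hint 1 m)).symm
      _ ≤ 1 + ∫ u in 1..m, u⁻¹ * (1 + Real.log u) ^ k := by
          gcongr ?_ + ?_
          · simpa using intervalIntegral.integral_mono_on zero_le_one (hint 0 1)
              intervalIntegrable_const fun u hu => cubeExpIntegral_le_one (k + 1) hu.1
          · refine intervalIntegral.integral_mono_on hm (hint 1 m)
              (intervalIntegrable_inv_mul_one_add_log_pow hm0 k) fun u hu => ?_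
            have hu0 : 0 < u := one_pos.trans_le hu.1
            rw [cubeExpIntegral_succ_eq_inv_mul k hu0]
            exact mul_le_mul_of_nonneg_left (ih hu.1 hu0) (inv_nonneg.2 hu0.le)
      _ = 1 + ((1 + Real.log m) ^ (k + 1) - 1) / (k + 1) := by
          rw [integral_inv_mul_one_add_log_pow hm0]
      _ ≤ (1 + Real.log m) ^ (k + 1) := by
          have : ((1 + Real.log m) ^ (k + 1) - 1) / (k + 1) ≤ (1 + Real.log m) ^ (k + 1) - 1 :=
            div_le_self (by linarith) (by linarith [k.cast_nonneg (α := ℝ)])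
          linarith

lemma cubeExpIntegral_half_isBigO (k : ℕ) :
    (fun n : ℕ => cubeExpIntegral (k + 1) (n / 2)) =O[atTop]
      fun n : ℕ => (n : ℝ)⁻¹ * Real.log n ^ k := by
  refine IsBigO.of_bound (2 ^ (k + 1)) ?_
  filter_upwards [eventually_ge_atTop 3] with n hn
  have hn : (3 : ℝ) ≤ n := by exact_mod_cast hn
  have hlog : 1 ≤ Real.log n := by
    rw [Real.le_log_iff_exp_le (by linarith)]
    linarith [Real.exp_one_lt_d9]
  rw [Real.norm_of_nonneg (cubeExpIntegral_nonneg _ _), Real.norm_of_nonneg (by positivity)]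
  have hlog_half : Real.log (n / 2) ≤ Real.log n := Real.log_le_log (by positivity) (by linarith)
  calc cubeExpIntegral (k + 1) (n / 2) ≤ ((n : ℝ) / 2)⁻¹ * (1 + Real.log (n / 2)) ^ k :=
        cubeExpIntegral_succ_le k (by linarith)
    _ ≤ ((n : ℝ) / 2)⁻¹ * (2 * Real.log n) ^ k := by
        gcongr
        · linarith [Real.log_nonneg (show (1 : ℝ) ≤ n / 2 by linarith)]
        · linarith
    _ = 2 ^ (k + 1) * ((n : ℝ)⁻¹ * Real.log n ^ k) := by
        field_simp
        ring

lemma pow_mul_integral_le_cubeExpIntegral (d k : ℕ) {m : ℝ} (hm : 0 ≤ m) :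
    m ^ k * ∫ x in unitCube d, (∏ j, x j) ^ k * Real.exp (-m * ∏ j, x j) ≤
      k.factorial * 2 ^ k * cubeExpIntegral d (m / 2) := by
  rw [cubeExpIntegral, ← integral_const_mul, ← integral_const_mul]
  refine setIntegral_mono_on (Continuous.integrableOn_unitCube (by fun_prop))
    (Continuous.integrableOn_unitCube (by fun_prop)) (measurableSet_unitCube d) fun x hx => ?_
  have h := pow_mul_exp_neg_le (mul_nonneg hm (prod_mem_Icc_of_mem_unitCube hx).1) k
  rw [mul_pow] at h
  rwa [neg_mul, neg_mul, div_mul_eq_mul_div, ← mul_assoc]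

lemma iotaHat_sub_iotaTilde (d n : ℕ) :
    iotaHat d n - iotaTilde d n = n ^ d * ∫ x in unitCube d,
      (∏ j, x j) ^ (d - 1) * (Real.exp (-n * ∏ j, x j) - (1 - ∏ j, x j) ^ n) := by
  rw [iotaHat, iotaTilde, ← unitCube, ← mul_sub,
    ← integral_sub (Continuous.integrableOn_unitCube (by fun_prop))
      (Continuous.integrableOn_unitCube (by fun_prop))]
  simp only [mul_sub]

lemma iotaHat_sub_iotaTilde_nonneg (d n : ℕ) : 0 ≤ iotaHat d n - iotaTilde d n := by
  rw [iotaHat_sub_iotaTilde]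
  refine mul_nonneg (by positivity) (setIntegral_nonneg (measurableSet_unitCube d) fun x hx => ?_)
  obtain ⟨h₀, h₁⟩ := prod_mem_Icc_of_mem_unitCube hx
  exact mul_nonneg (by positivity) (sub_nonneg.2 (one_sub_pow_le_exp_neg_mul h₁ n))

lemma iotaHat_sub_iotaTilde_le (d n : ℕ) :
    iotaHat d n - iotaTilde d n ≤ (n : ℝ) ^ (d + 1) *
      ∫ x in unitCube d, (∏ j, x j) ^ (d + 1) * Real.exp (-n * ∏ j, x j) := by
  rw [iotaHat_sub_iotaTilde, pow_succ, mul_assoc]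
  gcongr _ * ?_
  rw [← integral_const_mul]
  refine setIntegral_mono_on (Continuous.integrableOn_unitCube (by fun_prop))
    (Continuous.integrableOn_unitCube (by fun_prop)) (measurableSet_unitCube d) fun x hx => ?_
  obtain ⟨h₀, h₁⟩ := prod_mem_Icc_of_mem_unitCube hx
  set t := ∏ j, x j
  have hexp := exp_neg_mul_mul_le_one_sub_pow (by linarith) h₁ n
  have hpow : t ^ (d - 1) * t ^ 2 ≤ t ^ (d + 1) := by
    rw [← pow_add]; exact pow_le_pow_of_le_one h₀ h₁ (by omega)
  calc t ^ (d - 1) * (Real.exp (-n * t) - (1 - t) ^ n)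
      ≤ t ^ (d - 1) * (n * t ^ 2 * Real.exp (-n * t)) := by gcongr; linarith
    _ = n * (t ^ (d - 1) * t ^ 2 * Real.exp (-n * t)) := by ring
    _ ≤ n * (t ^ (d + 1) * Real.exp (-n * t)) := by gcongr

theorem stmt12 (d : ℕ) (hd : 1 ≤ d) :
    (∀ n : ℕ, 1 ≤ n →
        0 ≤ iotaHat d n - iotaTilde d n ∧
          iotaHat d n - iotaTilde d n ≤
            (n : ℝ) ^ (d + 1) *
              ∫ x in Set.univ.pi fun _ : Fin d => Set.Ico (0 : ℝ) 1,
                (∏ j, x j) ^ (d + 1) * Real.exp (-(n : ℝ) * ∏ j, x j)) ∧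
      (fun n : ℕ => iotaHat d n - iotaTilde d n)
        =O[atTop] fun n : ℕ => (n : ℝ)⁻¹ * (Real.log n) ^ (d - 1) := by
  refine ⟨fun n _ => ⟨iotaHat_sub_iotaTilde_nonneg d n, iotaHat_sub_iotaTilde_le d n⟩, ?_⟩
  obtain ⟨k, rfl⟩ := Nat.exists_eq_add_of_le' hd
  have hle (n : ℕ) : ‖iotaHat (k + 1) n - iotaTilde (k + 1) n‖ ≤
      (k + 2).factorial * 2 ^ (k + 2) * ‖cubeExpIntegral (k + 1) (n / 2)‖ := by
    rw [Real.norm_of_nonneg (iotaHat_sub_iotaTilde_nonneg _ n),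
      Real.norm_of_nonneg (cubeExpIntegral_nonneg _ _)]
    exact (iotaHat_sub_iotaTilde_le _ n).trans
      (pow_mul_integral_le_cubeExpIntegral (k + 1) (k + 2) n.cast_nonneg)
  simpa using (isBigO_of_le' _ hle).trans (cubeExpIntegral_half_isBigO k)
end

section
/- With b_n := ln n - ln ln ln n - ln c_n where c_n > 0 and c_n = Θ(1), and β_n := n e^{-b_n} = c_n ln ln n, as n → ∞ the expected number E ρ_n(b_n) of remaining records with coordinate-sum at most b_n satisfies E ρ_n(b_n) = (1 + o(1)) (ln n)^{d-1-c_n}/(d-1)!. -/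
open MeasureTheory Filter

open Real Topology Asymptotics

/-!
Put `β = n e^{-b}`. Bounding `(1 - t) ^ (n - 1)` above by `exp (-(n - 1) t)` and below by
`exp (-(n - 1) (t + 2 t²))`, the integrand becomes `y ^ e` times
`e^{-y} exp (-(n - 1) e^{-y})`, which has an explicit antiderivative. Its mass sits in the
window `[b - log log n, b]`, where `y ^ e ≈ (log n) ^ e`, so `n ∫ ≈ (log n) ^ e e^{-β}`;
and `(log n) ^ (-c_n) = e^{-β}` because `β = c_n log log n`.
-/

lemma tendsto_log_natCast_atTop : Tendsto (fun n : ℕ => log n) atTop atTop :=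
  tendsto_log_atTop.comp tendsto_natCast_atTop_atTop

/-- `(d - 1)! E ρ_n(b) = n * recordIntegral (d - 1) (n - 1) b`. -/
noncomputable def recordIntegral (e k : ℕ) (b : ℝ) : ℝ :=
  ∫ y in (0 : ℝ)..b, y ^ e * exp (-y) * (1 - exp (-y)) ^ k

lemma integral_exp_neg_mul_exp_neg_mul_exp_neg {a : ℝ} (ha : a ≠ 0) (u v : ℝ) :
    ∫ y in u..v, exp (-y) * exp (-(a * exp (-y))) =
      (exp (-(a * exp (-v))) - exp (-(a * exp (-u)))) / a := by
  have hderiv : ∀ x ∈ Set.uIcc u v, HasDerivAt (fun y => exp (-(a * exp (-y))) / a)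
      (exp (-x) * exp (-(a * exp (-x)))) x := by
    intro x _
    have hinner : HasDerivAt (fun y => -(a * exp (-y))) (a * exp (-x)) x :=
      ((hasDerivAt_neg x).exp.const_mul a).neg.congr_deriv (by ring)
    exact (hinner.exp.div_const a).congr_deriv (by field_simp)
  rw [intervalIntegral.integral_eq_sub_of_hasDerivAt hderiv
    (Continuous.intervalIntegrable (by fun_prop) _ _)]
  ring

lemma exp_neg_add_two_mul_sq_le_one_sub {x : ℝ} (hx₀ : 0 ≤ x) (hx : x ≤ 1 / 2) :
    exp (-(x + 2 * x ^ 2)) ≤ 1 - x := by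
  have hpos : 0 < 1 + (x + 2 * x ^ 2) := by positivity
  calc exp (-(x + 2 * x ^ 2)) = (exp (x + 2 * x ^ 2))⁻¹ := exp_neg _
    _ ≤ (1 + (x + 2 * x ^ 2))⁻¹ :=
        inv_anti₀ hpos (by linarith [add_one_le_exp (x + 2 * x ^ 2)])
    _ ≤ 1 - x := by rw [inv_le_iff_one_le_mul₀ hpos]; nlinarith

lemma recordIntegrand_nonneg (e k : ℕ) {y : ℝ} (hy : 0 ≤ y) :
    0 ≤ y ^ e * exp (-y) * (1 - exp (-y)) ^ k := by
  have : 0 ≤ 1 - exp (-y) := by linarith [exp_le_one_iff.mpr (neg_nonpos.mpr hy)]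
  positivity

lemma recordIntegral_nonneg (e k : ℕ) {b : ℝ} (hb : 0 ≤ b) : 0 ≤ recordIntegral e k b :=
  intervalIntegral.integral_nonneg hb fun _ hy => recordIntegrand_nonneg e k hy.1

lemma recordIntegral_le (e : ℕ) {k : ℕ} (hk : 0 < k) {b : ℝ} (hb : 0 ≤ b) :
    recordIntegral e k b ≤ b ^ e * exp (-(k * exp (-b))) / k := by
  have hk' : (0 : ℝ) < k := by exact_mod_cast hk
  have hbound : ∀ y ∈ Set.Icc 0 b, y ^ e * exp (-y) * (1 - exp (-y)) ^ k ≤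
      b ^ e * (exp (-y) * exp (-(k * exp (-y)))) := by
    rintro y ⟨hy₀, hyb⟩
    have hexp : exp (-y) ≤ 1 := exp_le_one_iff.mpr (neg_nonpos.mpr hy₀)
    have hpow : (1 - exp (-y)) ^ k ≤ exp (-(k * exp (-y))) := by
      calc (1 - exp (-y)) ^ k ≤ exp (-exp (-y)) ^ k :=
            pow_le_pow_left₀ (by linarith) (one_sub_le_exp_neg _) k
        _ = exp (-(k * exp (-y))) := by rw [← exp_nat_mul]; ring_nf
    calc y ^ e * exp (-y) * (1 - exp (-y)) ^ k ≤ b ^ e * exp (-y) * exp (-(k * exp (-y))) := by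
          gcongr
      _ = _ := by ring
  calc recordIntegral e k b ≤ ∫ y in (0 : ℝ)..b, b ^ e * (exp (-y) * exp (-(k * exp (-y)))) :=
        intervalIntegral.integral_mono_on hb (Continuous.intervalIntegrable (by fun_prop) _ _)
          (Continuous.intervalIntegrable (by fun_prop) _ _) hbound
    _ = b ^ e * ((exp (-(k * exp (-b))) - exp (-(k * exp (-0)))) / k) := by
        rw [intervalIntegral.integral_const_mul,
          integral_exp_neg_mul_exp_neg_mul_exp_neg hk'.ne']
    _ ≤ b ^ e * exp (-(k * exp (-b))) / k := by
        rw [mul_div_assoc]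
        gcongr
        linarith [exp_pos (-(k * exp (-0)))]

/-- On `[a, b]` with `exp (-a) ≤ 1/2`, `(1 - t) ^ k ≥ exp (-k t) exp (-2 k t ^ 2)` is
integrated exactly after freezing the second factor at `t = exp (-a)`. -/
lemma le_recordIntegral (e : ℕ) {k : ℕ} (hk : 0 < k) {a b : ℝ} (ha : 0 ≤ a) (hab : a ≤ b)
    (hexp : exp (-a) ≤ 1 / 2) :
    a ^ e * exp (-(2 * k * exp (-a) ^ 2)) *
        ((exp (-(k * exp (-b))) - exp (-(k * exp (-a)))) / k) ≤ recordIntegral e k b := by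
  have hk' : (0 : ℝ) < k := by exact_mod_cast hk
  have hbound : ∀ y ∈ Set.Icc a b,
      a ^ e * exp (-(2 * k * exp (-a) ^ 2)) * (exp (-y) * exp (-(k * exp (-y)))) ≤
        y ^ e * exp (-y) * (1 - exp (-y)) ^ k := by
    rintro y ⟨hay, -⟩
    have hy : 0 ≤ y := ha.trans hay
    have hx : exp (-y) ≤ exp (-a) := exp_le_exp.mpr (by linarith)
    have hsq : exp (-y) ^ 2 ≤ exp (-a) ^ 2 := pow_le_pow_left₀ (exp_nonneg _) hx 2
    have hpow : exp (-(k * exp (-y))) * exp (-(2 * k * exp (-a) ^ 2)) ≤ (1 - exp (-y)) ^ k := by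
      calc exp (-(k * exp (-y))) * exp (-(2 * k * exp (-a) ^ 2))
          ≤ exp (k * -(exp (-y) + 2 * exp (-y) ^ 2)) := by
            rw [← exp_add]; gcongr; nlinarith
        _ = exp (-(exp (-y) + 2 * exp (-y) ^ 2)) ^ k := exp_nat_mul _ _
        _ ≤ (1 - exp (-y)) ^ k := pow_le_pow_left₀ (exp_nonneg _)
            (exp_neg_add_two_mul_sq_le_one_sub (exp_nonneg _) (hx.trans hexp)) k
    calc a ^ e * exp (-(2 * k * exp (-a) ^ 2)) * (exp (-y) * exp (-(k * exp (-y))))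
        = a ^ e * exp (-y) * (exp (-(k * exp (-y))) * exp (-(2 * k * exp (-a) ^ 2))) := by ring
      _ ≤ y ^ e * exp (-y) * (1 - exp (-y)) ^ k := by gcongr
  calc a ^ e * exp (-(2 * k * exp (-a) ^ 2)) *
        ((exp (-(k * exp (-b))) - exp (-(k * exp (-a)))) / k)
      = ∫ y in a..b,
          a ^ e * exp (-(2 * k * exp (-a) ^ 2)) * (exp (-y) * exp (-(k * exp (-y)))) := by
        rw [intervalIntegral.integral_const_mul, integral_exp_neg_mul_exp_neg_mul_exp_neg hk'.ne']
    _ ≤ ∫ y in a..b, y ^ e * exp (-y) * (1 - exp (-y)) ^ k :=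
        intervalIntegral.integral_mono_on hab (Continuous.intervalIntegrable (by fun_prop) _ _)
          (Continuous.intervalIntegrable (by fun_prop) _ _) hbound
    _ ≤ recordIntegral e k b := by
        refine intervalIntegral.integral_mono_interval ha hab le_rfl ?_
          (Continuous.intervalIntegrable (by fun_prop) _ _)
        exact ae_restrict_of_forall_mem measurableSet_Ioc fun y hy =>
          recordIntegrand_nonneg e k hy.1.le

lemma mul_recordIntegral_div_le (e : ℕ) {n : ℕ} (hn : 2 ≤ n) {b L : ℝ} (hb : 0 ≤ b)
    (hL : 0 < L) :
    n * recordIntegral e (n - 1) b / (L ^ e * exp (-(n * exp (-b)))) ≤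
      (b / L) ^ e * (n / (n - 1 : ℝ)) * exp (exp (-b)) := by
  have hk : ((n - 1 : ℕ) : ℝ) = n - 1 := by rw [Nat.cast_sub (by omega)]; simp
  have hk₀ : (0 : ℝ) < n - 1 := by rw [← hk]; exact_mod_cast (by omega : 0 < n - 1)
  have hJ := recordIntegral_le e (by omega : 0 < n - 1) hb
  rw [hk] at hJ
  rw [div_le_iff₀ (by positivity)]
  calc n * recordIntegral e (n - 1) b
      ≤ n * (b ^ e * exp (-((n - 1) * exp (-b))) / (n - 1)) := by gcongr
    _ = (b / L) ^ e * (n / (n - 1 : ℝ)) * exp (exp (-b)) * (L ^ e * exp (-(n * exp (-b)))) := by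
        rw [div_pow, show -((n - 1) * exp (-b)) = exp (-b) + -(n * exp (-b)) by ring, exp_add]
        field_simp

lemma le_mul_recordIntegral_div (e : ℕ) {n : ℕ} (hn : 2 ≤ n) {b L : ℝ} (hL : 1 ≤ L)
    (hLb : log L ≤ b) (hbL : exp (-b) * L ≤ 1 / 2) :
    ((b - log L) / L) ^ e * exp (-(2 * n * (exp (-b) * L) ^ 2)) *
        (exp (exp (-b)) - exp (exp (-b) * L - n * exp (-b) * (L - 1))) ≤
      n * recordIntegral e (n - 1) b / (L ^ e * exp (-(n * exp (-b)))) := by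
  set a := b - log L
  set x := exp (-b)
  have hL₀ : 0 < L := by linarith
  have hxa : exp (-a) = x * L := by
    rw [show -a = -b + log L by ring, exp_add, exp_log hL₀]
  have hk : ((n - 1 : ℕ) : ℝ) = n - 1 := by rw [Nat.cast_sub (by omega)]; simp
  have hk₀ : (0 : ℝ) < n - 1 := by rw [← hk]; exact_mod_cast (by omega : 0 < n - 1)
  have hJ := le_recordIntegral e (by omega : 0 < n - 1) (a := a) (b := b)
    (by linarith) (by linarith [log_nonneg hL]) (hxa ▸ hbL)
  rw [hk, hxa] at hJ
  have hbracket_nonneg : 0 ≤ exp (-((n - 1) * x)) - exp (-((n - 1) * (x * L))) := by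
    have : x ≤ x * L := le_mul_of_one_le_right (exp_nonneg _) hL
    have : exp (-((n - 1) * (x * L))) ≤ exp (-((n - 1) * x)) := by gcongr
    linarith
  rw [le_div_iff₀ (by positivity)]
  calc (a / L) ^ e * exp (-(2 * n * (x * L) ^ 2)) * (exp x - exp (x * L - n * x * (L - 1))) *
        (L ^ e * exp (-(n * x)))
      = a ^ e * exp (-(2 * n * (x * L) ^ 2)) *
          (exp (-((n - 1) * x)) - exp (-((n - 1) * (x * L)))) := by
        have hbracket : (exp x - exp (x * L - n * x * (L - 1))) * exp (-(n * x)) =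
            exp (-((n - 1) * x)) - exp (-((n - 1) * (x * L))) := by
          rw [sub_mul, ← exp_add, ← exp_add]; ring_nf
        rw [div_pow, ← hbracket]
        field_simp
    _ ≤ a ^ e * exp (-(2 * (n - 1) * (x * L) ^ 2)) *
          (exp (-((n - 1) * x)) - exp (-((n - 1) * (x * L)))) := by
        have ha : 0 ≤ a := sub_nonneg.mpr hLb
        gcongr
        linarith
    _ = (n - 1) * (a ^ e * exp (-(2 * (n - 1) * (x * L) ^ 2)) *
          ((exp (-((n - 1) * x)) - exp (-((n - 1) * (x * L)))) / (n - 1))) := by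
        field_simp
    _ ≤ (n - 1) * recordIntegral e (n - 1) b := by gcongr
    _ ≤ n * recordIntegral e (n - 1) b := by
        gcongr
        · exact recordIntegral_nonneg e _ (by linarith [log_nonneg hL])
        · linarith

theorem tendsto_mul_recordIntegral_div (e : ℕ) {b : ℕ → ℝ}
    (hb : Tendsto (fun n : ℕ => b n / log n) atTop (𝓝 1))
    (hβ : Tendsto (fun n : ℕ => n * exp (-b n)) atTop atTop)
    (hβL : Tendsto (fun n : ℕ => n * (exp (-b n) * log n) ^ 2) atTop (𝓝 0)) :
    Tendsto (fun n : ℕ => n * recordIntegral e (n - 1) (b n) /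
      (log n ^ e * exp (-(n * exp (-b n))))) atTop (𝓝 1) := by
  have hL := tendsto_log_natCast_atTop
  have hLL : Tendsto (fun n : ℕ => log (log n) / log n) atTop (𝓝 0) :=
    isLittleO_log_id_atTop.tendsto_div_nhds_zero.comp hL
  have ha : Tendsto (fun n : ℕ => (b n - log (log n)) / log n) atTop (𝓝 1) := by
    simpa only [sub_div, sub_zero] using hb.sub hLL
  have hbtop : Tendsto b atTop atTop :=
    (hb.pos_mul_atTop one_pos hL).congr' <| by
      filter_upwards [hL.eventually_gt_atTop 0] with n hn using div_mul_cancel₀ _ hn.ne'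
  have hatop : Tendsto (fun n : ℕ => b n - log (log n)) atTop atTop :=
    (ha.pos_mul_atTop one_pos hL).congr' <| by
      filter_upwards [hL.eventually_gt_atTop 0] with n hn using div_mul_cancel₀ _ hn.ne'
  have hx : Tendsto (fun n : ℕ => exp (-b n)) atTop (𝓝 0) :=
    tendsto_exp_neg_atTop_nhds_zero.comp hbtop
  have hxL : Tendsto (fun n : ℕ => exp (-b n) * log n) atTop (𝓝 0) :=
    (tendsto_exp_neg_atTop_nhds_zero.comp hatop).congr' <| by
      filter_upwards [hL.eventually_gt_atTop 0] with n hn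
      rw [Function.comp_apply, show -(b n - log (log n)) = -b n + log (log n) by ring, exp_add,
        exp_log hn]
  have hgap : Tendsto (fun n : ℕ => exp (exp (-b n) * log n - n * exp (-b n) * (log n - 1)))
      atTop (𝓝 0) := by
    have hsub : Tendsto (fun n : ℕ => log n - 1) atTop atTop := by
      simpa only [sub_eq_add_neg] using tendsto_atTop_add_const_right _ (-1) hL
    simpa only [Function.comp_def, sub_eq_add_neg] using tendsto_exp_atBot.comp
      (hxL.add_atBot (tendsto_neg_atTop_atBot.comp (hβ.atTop_mul_atTop₀ hsub)))
  have hupper : Tendsto (fun n : ℕ => (b n / log n) ^ e * (n / (n - 1 : ℝ)) * exp (exp (-b n)))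
      atTop (𝓝 1) := by
    have hn : Tendsto (fun n : ℕ => (n : ℝ) / (n - 1)) atTop (𝓝 1) := by
      simpa only [sub_eq_add_neg] using tendsto_natCast_div_add_atTop (-1 : ℝ)
    simpa using ((hb.pow e).mul hn).mul ((continuous_exp.tendsto 0).comp hx)
  have hlower : Tendsto (fun n : ℕ => ((b n - log (log n)) / log n) ^ e *
      exp (-(2 * n * (exp (-b n) * log n) ^ 2)) *
        (exp (exp (-b n)) - exp (exp (-b n) * log n - n * exp (-b n) * (log n - 1))))
      atTop (𝓝 1) := by
    have hsq : Tendsto (fun n : ℕ => exp (-(2 * n * (exp (-b n) * log n) ^ 2)))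
        atTop (𝓝 1) := by
      simpa [Function.comp_def, mul_assoc] using
        (continuous_exp.tendsto _).comp (hβL.const_mul 2).neg
    simpa using ((ha.pow e).mul hsq).mul (((continuous_exp.tendsto 0).comp hx).sub hgap)
  refine tendsto_of_tendsto_of_tendsto_of_le_of_le' hlower hupper ?_ ?_
  · filter_upwards [eventually_ge_atTop 2, hL.eventually_ge_atTop 1, hatop.eventually_ge_atTop 0,
      hxL.eventually (eventually_le_nhds (by norm_num : (0 : ℝ) < 1 / 2))] with n hn hL1 ha0 hxL
    exact le_mul_recordIntegral_div e hn hL1 (by linarith) hxL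
  · filter_upwards [eventually_ge_atTop 2, hL.eventually_gt_atTop 0, hbtop.eventually_ge_atTop 0]
      with n hn hL0 hb0
    exact mul_recordIntegral_div_le e hn hb0 hL0

noncomputable def threshold (c : ℕ → ℝ) (n : ℕ) : ℝ :=
  log n - log (log (log n)) - log (c n)

lemma tendsto_threshold_div_log {c : ℕ → ℝ} {A B : ℝ} (hA : 0 < A)
    (hc : ∀ n, A ≤ c n ∧ c n ≤ B) :
    Tendsto (fun n : ℕ => threshold c n / log n) atTop (𝓝 1) := by
  have hL := tendsto_log_natCast_atTop
  have hLLL : Tendsto (fun n : ℕ => log (log (log n)) / log n) atTop (𝓝 0) :=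
    ((isLittleO_log_id_atTop.comp_tendsto tendsto_log_atTop).trans
      isLittleO_log_id_atTop).comp_tendsto hL |>.tendsto_div_nhds_zero
  have hlogc : Tendsto (fun n : ℕ => log (c n) / log n) atTop (𝓝 0) := by
    have hbdd : (fun n => log (c n)) =O[atTop] (fun _ => (1 : ℝ)) :=
      IsBigO.of_bound (max |log A| |log B|) (Eventually.of_forall fun n => by
        simpa using abs_le_max_abs_abs (log_le_log hA (hc n).1)
          (log_le_log (hA.trans_le (hc n).1) (hc n).2))
    exact (hbdd.trans_isLittleO ((isLittleO_one_left_iff ℝ).mpr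
      (tendsto_norm_atTop_atTop.comp hL))).tendsto_div_nhds_zero
  have hlim := (tendsto_const_nhds (x := (1 : ℝ))).sub hLLL |>.sub hlogc
  rw [sub_zero, sub_zero] at hlim
  refine hlim.congr' ?_
  filter_upwards [hL.eventually_gt_atTop 0] with n hn
  rw [threshold]
  field_simp

lemma mul_exp_neg_threshold {c : ℕ → ℝ} {n : ℕ} (hn : 0 < log (log n)) (hc : 0 < c n) :
    n * exp (-threshold c n) = c n * log (log n) := by
  have hn₀ : (0 : ℝ) < n := by
    rcases Nat.eq_zero_or_pos n with rfl | h
    · simp at hn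
    · exact_mod_cast h
  rw [threshold, show -(log n - log (log (log n)) - log (c n)) =
      log (log (log n)) + log (c n) - log n by ring, exp_sub, exp_add, exp_log hn, exp_log hc,
    exp_log hn₀]
  field_simp

lemma tendsto_mul_exp_neg_threshold {c : ℕ → ℝ} {A : ℝ} (hA : 0 < A)
    (hc : ∀ n, A ≤ c n) :
    Tendsto (fun n : ℕ => n * exp (-threshold c n)) atTop atTop := by
  have hLL : Tendsto (fun n : ℕ => log (log n)) atTop atTop :=
    tendsto_log_atTop.comp tendsto_log_natCast_atTop
  refine tendsto_atTop_mono' _ ?_ (hLL.const_mul_atTop hA)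
  filter_upwards [hLL.eventually_gt_atTop 0] with n hn
  rw [mul_exp_neg_threshold hn (hA.trans_le (hc n))]
  exact mul_le_mul_of_nonneg_right (hc n) hn.le

lemma tendsto_mul_exp_neg_threshold_mul_log_sq {c : ℕ → ℝ} {B : ℝ} (hc₀ : ∀ n, 0 < c n)
    (hc : ∀ n, c n ≤ B) :
    Tendsto (fun n : ℕ => n * (exp (-threshold c n) * log n) ^ 2) atTop (𝓝 0) := by
  have hL := tendsto_log_natCast_atTop
  have hL4 : Tendsto (fun n : ℕ => B ^ 2 * (log n ^ 4 / n)) atTop (𝓝 0) := by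
    simpa using ((tendsto_pow_log_div_mul_add_atTop 1 0 4 one_ne_zero).comp
      tendsto_natCast_atTop_atTop).const_mul (B ^ 2)
  refine tendsto_of_tendsto_of_tendsto_of_le_of_le' tendsto_const_nhds hL4
    (Eventually.of_forall fun n => by positivity) ?_
  filter_upwards [eventually_gt_atTop 0, (tendsto_log_atTop.comp hL).eventually_gt_atTop 0]
    with n hn hLL
  have hn' : (0 : ℝ) < n := by exact_mod_cast hn
  have hlog : 0 ≤ log n := log_nonneg (by exact_mod_cast hn)
  have hB : 0 ≤ B := (hc₀ n).le.trans (hc n)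
  calc n * (exp (-threshold c n) * log n) ^ 2
      = (n * exp (-threshold c n) * log n) ^ 2 / n := by field_simp
    _ = (c n * log (log n) * log n) ^ 2 / n := by rw [mul_exp_neg_threshold hLL (hc₀ n)]
    _ ≤ (B * log n * log n) ^ 2 / n := by
        have hcn : 0 ≤ c n := (hc₀ n).le
        have hLL_le : log (log n) ≤ log n := log_le_self hlog
        gcongr
        exact hc n
    _ = B ^ 2 * (log n ^ 4 / n) := by ring

lemma rpow_natCast_sub_one_sub {L : ℝ} (hL : 0 < L) {d : ℕ} (hd : 1 ≤ d) (c : ℝ) :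
    L ^ ((d : ℝ) - 1 - c) = L ^ (d - 1) * exp (-(c * log L)) := by
  rw [sub_eq_add_neg _ c, rpow_add hL, ← Nat.cast_pred hd, rpow_natCast, rpow_def_of_pos hL]
  ring_nf

theorem stmt17 (d : ℕ) (hd : 2 ≤ d) (c : ℕ → ℝ) (hc : ∀ n, 0 < c n)
    (hΘ : ∃ A B : ℝ, 0 < A ∧ ∀ n, A ≤ c n ∧ c n ≤ B)
    (b : ℕ → ℝ)
    (hb : ∀ n, b n = Real.log n - Real.log (Real.log (Real.log n)) - Real.log (c n)) :
    Tendsto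
      (fun n : ℕ =>
        ((n : ℝ) / ((d - 1).factorial : ℝ) *
            ∫ y in (0 : ℝ)..b n,
              y ^ (d - 1) * Real.exp (-y) * (1 - Real.exp (-y)) ^ (n - 1)) /
          ((Real.log n) ^ ((d : ℝ) - 1 - c n) / ((d - 1).factorial : ℝ)))
      atTop (nhds 1) := by
  obtain ⟨A, B, hA, hAB⟩ := hΘ
  obtain rfl : b = threshold c := funext hb
  have hlim := tendsto_mul_recordIntegral_div (d - 1) (tendsto_threshold_div_log hA hAB)
    (tendsto_mul_exp_neg_threshold hA fun n => (hAB n).1)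
    (tendsto_mul_exp_neg_threshold_mul_log_sq hc fun n => (hAB n).2)
  refine hlim.congr' ?_
  filter_upwards [tendsto_log_natCast_atTop.eventually_gt_atTop 0,
    (tendsto_log_atTop.comp tendsto_log_natCast_atTop).eventually_gt_atTop 0] with n hL hn
  rw [rpow_natCast_sub_one_sub hL (by omega), ← mul_exp_neg_threshold hn (hc n),
    recordIntegral]
  field_simp
end
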